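/- For every positive integer p, ε_p > g(p) - g(p+1), where g(x) := (1/12)/(x + (1/30)/x). -/

import Mathlib

/-!
With `t = 1/(2p+1)` one has `(1+t)/(1-t) = (p+1)/p`, so the series of `log((1+t)/(1-t))` gives
`ε_p = t²/3 + t⁴/5 + t⁶/7 + ⋯`; in particular `ε_p ≥ t²/3 + t⁴/5`. On the other side
`g x = 5x / (2(30x² + 1))`, and in the variable `v = (2x+1)²` the difference
`t²/3 + t⁴/5 - (g x - g (x+1))` is the explicitly positive `(275 v + 867) / (15 v² Q(v))` with
`Q(v) = (15 v - 13)² + 120`.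
-/

/-- Robbins' summand: `ε_p = (p + 1/2) log((p+1)/p) - 1`. -/
noncomputable def eps (p : ℕ) : ℝ :=
  ((p : ℝ) + 1/2) * Real.log (((p : ℝ) + 1) / p) - 1

/-- Depth-2 continued fraction with numerators `1/12` and `1/30`. -/
noncomputable def g (x : ℝ) : ℝ := (1/12) / (x + (1/30) / x)

open Real Finset

lemma sq_div_three_add_pow_four_div_five_le {a : ℝ} (ha : 0 < a) :
    (1 / (2 * a + 1)) ^ 2 / 3 + (1 / (2 * a + 1)) ^ 4 / 5 ≤ (a + 1 / 2) * log (1 + a⁻¹) - 1 := by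
  obtain ⟨t, ht⟩ : ∃ t, t = 1 / (2 * a + 1) := ⟨_, rfl⟩
  have hsum := sum_le_hasSum (range 3) (fun k _ => by positivity) (hasSum_log_one_add_inv ha)
  norm_num [sum_range_succ, ← ht] at hsum
  have hat : (a + 1 / 2) * (2 * t) = 1 := by
    rw [ht]
    field_simp
  rw [← ht]
  calc t ^ 2 / 3 + t ^ 4 / 5 = (a + 1 / 2) * (2 * t + 2 * t ^ 3 / 3 + 2 * t ^ 5 / 5) - 1 := by
        linear_combination -(1 + t ^ 2 / 3 + t ^ 4 / 5) * hat
    _ ≤ (a + 1 / 2) * log (1 + a⁻¹) - 1 := by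
        gcongr
        linarith

lemma eps_eq_mul_log_one_add_inv (p : ℕ) :
    eps p = ((p : ℝ) + 1 / 2) * log (1 + (p : ℝ)⁻¹) - 1 := by
  rcases Nat.eq_zero_or_pos p with rfl | hp
  · simp [eps]
  · have hratio : ((p : ℝ) + 1) / p = 1 + (p : ℝ)⁻¹ := by field_simp
    rw [eps, hratio]

lemma g_eq_div (x : ℝ) : g x = 5 * x / (2 * (30 * x ^ 2 + 1)) := by
  rcases eq_or_ne x 0 with rfl | hx
  · simp [g]
  · rw [g]
    field_simp
    ring

lemma g_sub_g_add_one_lt {x : ℝ} (hx : 2 * x + 1 ≠ 0) :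
    g x - g (x + 1) < (1 / (2 * x + 1)) ^ 2 / 3 + (1 / (2 * x + 1)) ^ 4 / 5 := by
  obtain ⟨v, hv⟩ : ∃ v, v = (2 * x + 1) ^ 2 := ⟨_, rfl⟩
  have hv0 : 0 < v := hv ▸ by positivity
  have key : (1 / (2 * x + 1)) ^ 2 / 3 + (1 / (2 * x + 1)) ^ 4 / 5 - (g x - g (x + 1))
      = (275 * v + 867) / (15 * v ^ 2 * ((15 * v - 13) ^ 2 + 120)) := by
    have hQ : (15 * v - 13) ^ 2 + 120 ≠ 0 := by positivity
    rw [g_eq_div, g_eq_div]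
    field_simp
    subst hv
    ring
  have : 0 < (275 * v + 867) / (15 * v ^ 2 * ((15 * v - 13) ^ 2 + 120)) := by positivity
  linarith

/-- For every positive integer `p`, `ε_p > g(p) - g(p+1)`. -/
theorem eps_gt_g_diff (p : ℕ) (hp : 0 < p) :
    eps p > g p - g ((p : ℝ) + 1) := by
  calc g p - g ((p : ℝ) + 1)
      < (1 / (2 * (p : ℝ) + 1)) ^ 2 / 3 + (1 / (2 * (p : ℝ) + 1)) ^ 4 / 5 :=
        g_sub_g_add_one_lt (by positivity)
    _ ≤ eps p :=
        eps_eq_mul_log_one_add_inv p ▸ sq_div_three_add_pow_four_div_five_le (by exact_mod_cast hp)
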